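/- arXiv:math/0509409 — 2 statements merged into one kernel-verified Lean document; each statement's English description precedes it below -/
import Mathlib

section
/- Let f, g : ℂ → ℂ be holomorphic on a neighborhood of a closed disc D centered at 0 with radius r > 0, vanishing only at 0 inside D, and suppose |f(z) - g(z)| < |f(z)| for all z on the boundary circle of D. Then the order of vanishing of f at 0 equals the order of vanishing of g at 0. -/
open Metric Filter Complex Topology

-- auxiliary: no analytic function on a nbhd of the closed disc with q 0 = 0 and Re q > 0 on the circle
lemma aux_no_such (q : ℂ → ℂ) (r : ℝ) (hr : 0 < r)
    (hq : ∀ z ∈ closedBall (0 : ℂ) r, AnalyticAt ℂ q z)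
    (hq0 : q 0 = 0)
    (hre : ∀ z ∈ sphere (0 : ℂ) r, 0 < (q z).re) : False := by
  set φ : ℂ → ℂ := fun z => Complex.exp (-q z) with hφ
  have hdφ : ∀ z ∈ closedBall (0 : ℂ) r, DifferentiableAt ℂ φ z := by
    intro z hz
    exact (Complex.differentiable_exp.differentiableAt).comp z ((hq z hz).differentiableAt.neg)
  have hcl : closure (ball (0 : ℂ) r) = closedBall (0 : ℂ) r := closure_ball 0 hr.ne'
  have hDC : DiffContOnCl ℂ φ (ball (0 : ℂ) r) := by
    refine ⟨fun z hz => (hdφ z (ball_subset_closedBall hz)).differentiableWithinAt, ?_⟩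
    rw [hcl]
    exact fun z hz => (hdφ z hz).continuousAt.continuousWithinAt
  have hfr : frontier (ball (0 : ℂ) r) = sphere (0 : ℂ) r := frontier_ball 0 hr.ne'
  -- max of ‖φ‖ on the sphere
  have hsne : (sphere (0 : ℂ) r).Nonempty := NormedSpace.sphere_nonempty.mpr hr.le
  have hcont : ContinuousOn (fun z => ‖φ z‖) (sphere (0 : ℂ) r) := by
    refine (continuous_norm.comp_continuousOn ?_)
    exact fun z hz => (hdφ z (sphere_subset_closedBall hz)).continuousAt.continuousWithinAt
  obtain ⟨z₀, hz₀, hmax⟩ := (isCompact_sphere (0 : ℂ) r).exists_isMaxOn hsne hcont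
  have hC : ‖φ z₀‖ < 1 := by
    have h0 : 0 < (q z₀).re := hre z₀ hz₀
    have : ‖φ z₀‖ = Real.exp (-(q z₀).re) := by
      simp [hφ, Complex.norm_exp]
    rw [this]
    exact Real.exp_lt_one_iff.mpr (by linarith)
  have h0mem : (0 : ℂ) ∈ closure (ball (0 : ℂ) r) := by
    rw [hcl]; exact mem_closedBall_self hr.le
  have hle : ‖φ 0‖ ≤ ‖φ z₀‖ := by
    refine Complex.norm_le_of_forall_mem_frontier_norm_le isBounded_ball hDC ?_ h0mem
    intro z hz
    rw [hfr] at hz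
    exact hmax hz
  have : ‖φ 0‖ = 1 := by simp [hφ, hq0]
  rw [this] at hle
  linarith

-- key lemma: if order f < order g then contradiction
lemma key (f g : ℂ → ℂ) (r : ℝ) (hr : 0 < r)
    (U : Set ℂ) (hU : IsOpen U) (hDU : closedBall (0 : ℂ) r ⊆ U)
    (hf : ∀ z ∈ U, AnalyticAt ℂ f z) (hg : ∀ z ∈ U, AnalyticAt ℂ g z)
    (hfz : ∀ z ∈ closedBall (0 : ℂ) r, z ≠ 0 → f z ≠ 0)
    (m n : ℕ) (hmn : m < n)
    (F : ℂ → ℂ) (hFa : AnalyticAt ℂ F 0) (hF0 : F 0 ≠ 0)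
    (hFf : ∀ᶠ z in 𝓝 (0 : ℂ), f z = z ^ m * F z)
    (G : ℂ → ℂ) (hGa : AnalyticAt ℂ G 0)
    (hGg : ∀ᶠ z in 𝓝 (0 : ℂ), g z = z ^ n * G z)
    (hre : ∀ z ∈ sphere (0 : ℂ) r, 0 < (g z / f z).re) : False := by
  set q : ℂ → ℂ := fun z => if z = 0 then 0 else g z / f z with hq
  have hq0 : q 0 = 0 := if_pos rfl
  have hqan : ∀ z ∈ closedBall (0 : ℂ) r, AnalyticAt ℂ q z := by
    intro z hz
    by_cases h0 : z = 0
    · subst h0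
      have hFne : ∀ᶠ w in 𝓝 (0 : ℂ), F w ≠ 0 :=
        hFa.continuousAt.eventually_ne hF0
      have heq : (fun w : ℂ => w ^ (n - m) * (G w / F w)) =ᶠ[𝓝 (0 : ℂ)] q := by
        filter_upwards [hFf, hGg, hFne] with w hfw hgw hFw
        by_cases hw : w = 0
        · subst hw
          have : (0 : ℂ) ^ (n - m) = 0 := zero_pow (by omega)
          simp [hq, this]
        · have hq' : q w = g w / f w := if_neg hw
          rw [hq', hfw, hgw]
          have hn' : n = (n - m) + m := by omega
          rw [hn', pow_add]
          field_simp
          rw [Nat.add_sub_cancel, mul_comm]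
      have hrhs : AnalyticAt ℂ (fun w : ℂ => w ^ (n - m) * (G w / F w)) 0 := by
        exact (analyticAt_id.pow _).mul (hGa.div hFa hF0)
      exact hrhs.congr heq
    · have hne : f z ≠ 0 := hfz z hz h0
      have hzU : z ∈ U := hDU hz
      have hev : (fun w => g w / f w) =ᶠ[𝓝 z] q := by
        have : ∀ᶠ w in 𝓝 z, w ≠ 0 := isOpen_ne.eventually_mem h0
        filter_upwards [this] with w hw
        exact (if_neg hw).symm
      exact (((hg z hzU).div (hf z hzU) hne)).congr hev
  refine aux_no_such q r hr hqan hq0 ?_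
  intro z hz
  have hz0 : z ≠ 0 := by
    intro h; rw [h] at hz
    simp at hz
    exact hr.ne (by simpa using hz)
  have : q z = g z / f z := if_neg hz0
  rw [this]
  exact hre z hz

lemma re_pos_of_abs_one_sub (w : ℂ) (h : ‖1 - w‖ < 1) : 0 < w.re := by
  have h0 : ‖1 - w‖ ^ 2 < 1 := by nlinarith [norm_nonneg (1 - w)]
  rw [Complex.sq_norm, Complex.normSq_apply] at h0
  simp only [Complex.sub_re, Complex.sub_im, Complex.one_re, Complex.one_im] at h0
  nlinarith [sq_nonneg w.re, sq_nonneg w.im]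

lemma re_pos_of_abs_sub_one (w : ℂ) (h : ‖w - 1‖ < ‖w‖) : 0 < w.re := by
  have h0 : ‖w - 1‖ ^ 2 < ‖w‖ ^ 2 := by
    nlinarith [norm_nonneg (w - 1), norm_nonneg w]
  rw [Complex.sq_norm, Complex.sq_norm, Complex.normSq_apply, Complex.normSq_apply] at h0
  simp only [Complex.sub_re, Complex.sub_im, Complex.one_re, Complex.one_im] at h0
  nlinarith

/-- If `f` and `g` are holomorphic near the closed disc of radius `r` about `0`,
vanish only at `0` there, and satisfy the Rouché inequality `|f - g| < |f|` on the
boundary circle, then their orders of vanishing at `0` agree. -/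
theorem rouche_satellite_order_eq (f g : ℂ → ℂ) (r : ℝ) (hr : 0 < r)
    (U : Set ℂ) (hU : IsOpen U) (hDU : closedBall (0 : ℂ) r ⊆ U)
    (hf : ∀ z ∈ U, AnalyticAt ℂ f z) (hg : ∀ z ∈ U, AnalyticAt ℂ g z)
    (hf0 : AnalyticAt ℂ f 0) (hg0 : AnalyticAt ℂ g 0)
    (hfz : ∀ z ∈ closedBall (0 : ℂ) r, f z = 0 → z = 0)
    (hgz : ∀ z ∈ closedBall (0 : ℂ) r, g z = 0 → z = 0)
    (hrou : ∀ z : ℂ, ‖z‖ = r → ‖f z - g z‖ < ‖f z‖) :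
    analyticOrderAt f 0 = analyticOrderAt g 0 := by
  -- boundary nonvanishing
  have hfb : ∀ z : ℂ, ‖z‖ = r → f z ≠ 0 := by
    intro z hz hfz0
    have := hrou z hz
    rw [hfz0] at this
    simp only [zero_sub, norm_zero, norm_neg] at this
    exact absurd this (norm_nonneg _).not_gt
  have hgb : ∀ z : ℂ, ‖z‖ = r → g z ≠ 0 := by
    intro z hz hgz0
    have := hrou z hz
    rw [hgz0, sub_zero] at this
    exact absurd this (lt_irrefl _)
  -- orders are finite
  have hford : analyticOrderAt f 0 ≠ ⊤ := by
    intro h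
    rw [analyticOrderAt_eq_top] at h
    rw [Metric.eventually_nhds_iff] at h
    obtain ⟨ε, hε, hev⟩ := h
    set w : ℂ := ((min (ε / 2) r : ℝ) : ℂ) with hw
    have hwpos : 0 < min (ε / 2) r := lt_min (by linarith) hr
    have habs : ‖w‖ = min (ε / 2) r := by
      rw [hw, Complex.norm_real, Real.norm_eq_abs, abs_of_pos hwpos]
    have hwball : w ∈ closedBall (0 : ℂ) r := by
      rw [mem_closedBall, dist_zero_right, habs]
      exact min_le_right _ _
    have hwz : f w = 0 := by
      apply hev
      rw [dist_zero_right, habs]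
      exact lt_of_le_of_lt (min_le_left _ _) (by linarith)
    have : w = 0 := hfz w hwball hwz
    rw [hw] at this
    have : min (ε / 2) r = 0 := by exact_mod_cast Complex.ofReal_eq_zero.mp this
    linarith
  have hgord : analyticOrderAt g 0 ≠ ⊤ := by
    intro h
    rw [analyticOrderAt_eq_top] at h
    rw [Metric.eventually_nhds_iff] at h
    obtain ⟨ε, hε, hev⟩ := h
    set w : ℂ := ((min (ε / 2) r : ℝ) : ℂ) with hw
    have hwpos : 0 < min (ε / 2) r := lt_min (by linarith) hr
    have habs : ‖w‖ = min (ε / 2) r := by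
      rw [hw, Complex.norm_real, Real.norm_eq_abs, abs_of_pos hwpos]
    have hwball : w ∈ closedBall (0 : ℂ) r := by
      rw [mem_closedBall, dist_zero_right, habs]
      exact min_le_right _ _
    have hwz : g w = 0 := by
      apply hev
      rw [dist_zero_right, habs]
      exact lt_of_le_of_lt (min_le_left _ _) (by linarith)
    have : w = 0 := hgz w hwball hwz
    rw [hw] at this
    have : min (ε / 2) r = 0 := by exact_mod_cast Complex.ofReal_eq_zero.mp this
    linarith
  obtain ⟨m, hm⟩ := WithTop.ne_top_iff_exists.mp hford
  obtain ⟨n, hn⟩ := WithTop.ne_top_iff_exists.mp hgord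
  rw [← hm, ← hn]
  obtain ⟨F, hFa, hF0, hFf⟩ := (hf0.analyticOrderAt_eq_natCast (n := m)).mp hm.symm
  obtain ⟨G, hGa, hG0, hGg⟩ := (hg0.analyticOrderAt_eq_natCast (n := n)).mp hn.symm
  have hFf' : ∀ᶠ z in nhds (0 : ℂ), f z = z ^ m * F z := by
    filter_upwards [hFf] with z hz; simpa [smul_eq_mul] using hz
  have hGg' : ∀ᶠ z in nhds (0 : ℂ), g z = z ^ n * G z := by
    filter_upwards [hGg] with z hz; simpa [smul_eq_mul] using hz
  have hsph : ∀ z ∈ sphere (0 : ℂ) r, ‖z‖ = r := by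
    intro z hz
    rwa [mem_sphere_iff_norm, sub_zero] at hz
  rcases lt_trichotomy m n with hmn | hmn | hmn
  · exfalso
    refine key f g r hr U hU hDU hf hg ?_ m n hmn F hFa hF0 hFf' G hGa hGg' ?_
    · intro z hz hz0 hfz0
      exact hz0 (hfz z hz hfz0)
    · intro z hz
      have habs := hsph z hz
      have hfne := hfb z habs
      have h1 : (1 : ℂ) - g z / f z = (f z - g z) / f z := by field_simp
      have h2 : ‖(1 : ℂ) - g z / f z‖ < 1 := by
        rw [h1, norm_div]
        rw [div_lt_one (by
          have := norm_nonneg (f z)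
          rcases this.lt_or_eq with h | h
          · exact h
          · exact absurd (norm_eq_zero.mp h.symm) hfne)]
        exact hrou z habs
      exact re_pos_of_abs_one_sub _ h2
  · exact congrArg (Nat.cast : ℕ → ℕ∞) hmn
  · exfalso
    refine key g f r hr U hU hDU hg hf ?_ n m hmn G hGa hG0 hGg' F hFa hFf' ?_
    · intro z hz hz0 hgz0
      exact hz0 (hgz z hz hgz0)
    · intro z hz
      have habs := hsph z hz
      have hgne := hgb z habs
      have h1 : f z / g z - 1 = (f z - g z) / g z := by field_simp
      have h2 : ‖f z / g z - 1‖ < ‖f z / g z‖ := by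
        have hgpos : 0 < ‖g z‖ :=
          (norm_nonneg _).lt_of_ne fun h => hgne (norm_eq_zero.mp h.symm)
        rw [h1, norm_div, norm_div]
        exact div_lt_div_of_pos_right (hrou z habs) hgpos
      exact re_pos_of_abs_sub_one _ h2
end

section
/- Let f be a nonzero power series in one complex variable with positive radius of convergence and f(0) = 0, of order ν at 0. Then ν equals the number of zeros of f, counted with multiplicity, in any sufficiently small disc around 0; in particular, for any holomorphic g near 0 vanishing only at 0 on a closed disc D on which Rouché's inequality |f - g| < |f| holds on ∂D and f vanishes only at 0 in D, the order of g at 0 is ν. -/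
open Metric

-- The order of vanishing of `f` at `z` (zero if `f` is not analytic at `z`).
open scoped Classical in
noncomputable def zeroOrderAt (f : ℂ → ℂ) (z : ℂ) : ℕ∞ :=
  if h : AnalyticAt ℂ f z then analyticOrderAt f z else 0

private lemma aux_cauchy {h : ℂ → ℂ} {U : Set ℂ} (hU : IsOpen U) {r : ℝ} (hr : 0 ≤ r)
    (hsub : closedBall (0:ℂ) r ⊆ U) (hd : DifferentiableOn ℂ h U) :
    (∮ z in C((0:ℂ), r), h z) = 0 :=
  Complex.circleIntegral_eq_zero_of_differentiable_on_off_countable hr Set.countable_empty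
    (hd.continuousOn.mono hsub)
    (fun z hz => hd.differentiableAt (hU.mem_nhds (hsub (ball_subset_closedBall hz.1))))

private lemma aux_deriv_circle {F : ℂ → ℂ} {W : Set ℂ} (hW : IsOpen W) {r : ℝ} (hr : 0 < r)
    (hsub : sphere (0:ℂ) r ⊆ W) (hF : AnalyticOnNhd ℂ F W) :
    (∮ z in C((0:ℂ), r), deriv F z) = 0 := by
  apply circleIntegral.integral_eq_zero_of_hasDerivWithinAt hr.le
  intro z hz
  exact ((hF z (hsub hz)).differentiableAt.hasDerivAt).hasDerivWithinAt

private lemma aux_argument_principle {f : ℂ → ℂ} {U : Set ℂ} (hU : IsOpen U) {r : ℝ}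
    (hr : 0 < r) (hsub : closedBall (0:ℂ) r ⊆ U) (hf : AnalyticOnNhd ℂ f U)
    (hzero : ∀ z ∈ closedBall (0:ℂ) r, f z = 0 → z = 0) {n : ℕ}
    (h0 : AnalyticAt ℂ f 0) (hn : analyticOrderAt f 0 = n) :
    (∮ z in C((0:ℂ), r), deriv f z / f z) = 2 * Real.pi * Complex.I * n := by
  obtain ⟨w, hw, hw0, hfw⟩ := (h0.analyticOrderAt_eq_natCast (n := n)).mp hn
  have hfw' : ∀ᶠ z in nhds (0:ℂ), f z = z ^ n * w z := by
    filter_upwards [hfw] with z hz; simpa using hz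
  set u : ℂ → ℂ := fun z => if z = 0 then w 0 else f z / z ^ n with hu_def
  have huw : u =ᶠ[nhds (0:ℂ)] w := by
    filter_upwards [hfw'] with z hz
    by_cases h : z = 0
    · simp [hu_def, h]
    · simp only [hu_def, if_neg h]
      rw [hz, mul_div_cancel_left₀ _ (pow_ne_zero n h)]
  have hu0 : AnalyticAt ℂ u 0 := hw.congr huw.symm
  have hu : AnalyticOnNhd ℂ u U := by
    intro z hz
    by_cases h : z = 0
    · exact h ▸ hu0
    · have h1 : AnalyticAt ℂ (fun z' => f z' / z' ^ n) z :=
        (hf z hz).div (analyticAt_id.pow n) (pow_ne_zero n h)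
      refine h1.congr ?_
      filter_upwards [eventually_ne_nhds h] with z' hz'
      simp [hu_def, if_neg hz']
  have hfeq : ∀ z, f z = z ^ n * u z := by
    intro z
    by_cases h : z = 0
    · subst h
      have := hfw'.self_of_nhds
      simpa [hu_def] using this
    · simp only [hu_def, if_neg h]
      rw [mul_div_cancel₀ _ (pow_ne_zero n h)]
  have hune : ∀ z ∈ closedBall (0:ℂ) r, u z ≠ 0 := by
    intro z hz
    by_cases h : z = 0
    · simpa [hu_def, h] using hw0
    · have hfz : f z ≠ 0 := fun hfz => h (hzero z hz hfz)
      simp only [hu_def, if_neg h]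
      exact div_ne_zero hfz (pow_ne_zero n h)
  -- the set where u is analytic and nonzero
  have hVopen : IsOpen (U ∩ u ⁻¹' {(0:ℂ)}ᶜ) :=
    hu.continuousOn.isOpen_inter_preimage hU isOpen_compl_singleton
  have hVsub : closedBall (0:ℂ) r ⊆ U ∩ u ⁻¹' {(0:ℂ)}ᶜ :=
    fun z hz => ⟨hsub hz, hune z hz⟩
  have huV : AnalyticOnNhd ℂ u (U ∩ u ⁻¹' {(0:ℂ)}ᶜ) := hu.mono Set.inter_subset_left
  have hdiff : DifferentiableOn ℂ (fun z => deriv u z / u z) (U ∩ u ⁻¹' {(0:ℂ)}ᶜ) :=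
    (huV.deriv.div huV (fun z hz => hz.2)).differentiableOn
  have hcauchy : (∮ z in C((0:ℂ), r), deriv u z / u z) = 0 :=
    aux_cauchy hVopen hr.le hVsub hdiff
  have heq : Set.EqOn (fun z => deriv f z / f z)
      (fun z => (n : ℂ) * (z - 0)⁻¹ + deriv u z / u z) (sphere (0:ℂ) r) := by
    intro z hz
    have hz0 : z ≠ 0 := ne_of_mem_sphere hz hr.ne'
    have hzU : z ∈ U := hsub (sphere_subset_closedBall hz)
    have huz : u z ≠ 0 := hune z (sphere_subset_closedBall hz)
    have hderf : HasDerivAt f ((n:ℂ) * z ^ (n - 1) * u z + z ^ n * deriv u z) z := by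
      have h1 : HasDerivAt (fun w => w ^ n * u w)
          ((n:ℂ) * z ^ (n - 1) * u z + z ^ n * deriv u z) z :=
        (hasDerivAt_pow n z).mul ((hu z hzU).differentiableAt.hasDerivAt)
      exact h1.congr_of_eventuallyEq (Filter.Eventually.of_forall (fun w => hfeq w))
    simp only
    rw [hderf.deriv, hfeq z, sub_zero]
    cases n with
    | zero => simp
    | succ m =>
      have hzp : z ^ (m + 1) ≠ 0 := pow_ne_zero _ hz0
      rw [Nat.add_sub_cancel]
      field_simp
      ring
  have hintf : CircleIntegrable (fun z => deriv f z / f z) 0 r := by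
    apply ContinuousOn.circleIntegrable hr.le
    refine ((hf.deriv.continuousOn.mono ?_).div (hf.continuousOn.mono ?_) ?_)
    · exact sphere_subset_closedBall.trans hsub
    · exact sphere_subset_closedBall.trans hsub
    · exact fun z hz h =>
        (ne_of_mem_sphere hz hr.ne') (hzero z (sphere_subset_closedBall hz) h)
  have hint1 : CircleIntegrable (fun z => (n : ℂ) * (z - 0)⁻¹) 0 r := by
    apply ContinuousOn.circleIntegrable hr.le
    apply ContinuousOn.mul continuousOn_const
    apply ContinuousOn.inv₀ (by fun_prop)
    intro z hz
    rw [sub_zero]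
    exact ne_of_mem_sphere hz hr.ne'
  have hsub2 : (∮ z in C((0:ℂ), r), (deriv f z / f z - (n : ℂ) * (z - 0)⁻¹)) = 0 := by
    have heq' : Set.EqOn (fun z => deriv f z / f z - (n : ℂ) * (z - 0)⁻¹)
        (fun z => deriv u z / u z) (sphere (0:ℂ) r) := by
      intro z hz
      have h' := heq hz
      simp only at h' ⊢
      rw [h']
      ring
    rw [circleIntegral.integral_congr hr.le heq', hcauchy]
  rw [circleIntegral.integral_sub hintf hint1] at hsub2
  rw [sub_eq_zero.mp hsub2]
  have : (∮ z in C((0:ℂ), r), (n : ℂ) * (z - 0)⁻¹)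
      = (n : ℂ) • ∮ z in C((0:ℂ), r), (z - 0)⁻¹ := by
    rw [← circleIntegral.integral_smul]
    simp [smul_eq_mul]
  rw [this, circleIntegral.integral_sub_inv_of_mem_ball (mem_ball_self hr), smul_eq_mul]
  ring

private lemma aux_rouche {f g : ℂ → ℂ} {U : Set ℂ} (hU : IsOpen U) {r : ℝ} (hr : 0 < r)
    (hsub : closedBall (0:ℂ) r ⊆ U) (hf : AnalyticOnNhd ℂ f U) (hg : AnalyticOnNhd ℂ g U)
    (hfne : ∀ z ∈ sphere (0:ℂ) r, f z ≠ 0)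
    (hlt : ∀ z ∈ sphere (0:ℂ) r, ‖f z - g z‖ < ‖f z‖) :
    (∮ z in C((0:ℂ), r), deriv f z / f z) = ∮ z in C((0:ℂ), r), deriv g z / g z := by
  have hgne : ∀ z ∈ sphere (0:ℂ) r, g z ≠ 0 := by
    intro z hz hgz
    have := hlt z hz
    rw [hgz, sub_zero] at this
    exact lt_irrefl _ this
  -- the open set on which log (g/f) is defined and analytic
  have hVopen : IsOpen (U ∩ f ⁻¹' {(0:ℂ)}ᶜ) :=
    hf.continuousOn.isOpen_inter_preimage hU isOpen_compl_singleton
  have hqc : ContinuousOn (fun z => g z / f z) (U ∩ f ⁻¹' {(0:ℂ)}ᶜ) :=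
    (hg.continuousOn.mono Set.inter_subset_left).div
      (hf.continuousOn.mono Set.inter_subset_left) (fun z hz => hz.2)
  set W : Set ℂ := (U ∩ f ⁻¹' {(0:ℂ)}ᶜ) ∩ (fun z => g z / f z) ⁻¹' Complex.slitPlane with hW_def
  have hWopen : IsOpen W := hqc.isOpen_inter_preimage hVopen Complex.isOpen_slitPlane
  have hWsub : sphere (0:ℂ) r ⊆ W := by
    intro z hz
    have hfz := hfne z hz
    refine ⟨⟨hsub (sphere_subset_closedBall hz), hfz⟩, ?_⟩
    have habs : ‖g z / f z - 1‖ < 1 := by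
      rw [show g z / f z - 1 = (g z - f z) / f z by field_simp]
      rw [norm_div, div_lt_one (by simpa using hfz)]
      calc ‖g z - f z‖ = ‖f z - g z‖ := norm_sub_rev _ _
        _ < ‖f z‖ := hlt z hz
    have hre : 0 < (g z / f z).re := by
      have h1 : (g z / f z - 1).re ≤ ‖g z / f z - 1‖ := Complex.re_le_norm _
      have h2 : (g z / f z - 1).re = (g z / f z).re - 1 := by simp
      have h3 : |(g z / f z - 1).re| ≤ ‖g z / f z - 1‖ :=
        Complex.abs_re_le_norm _
      have h4 := (abs_lt.mp (lt_of_le_of_lt h3 habs)).1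
      linarith
    exact Or.inl hre
  have hFan : AnalyticOnNhd ℂ (fun z => Complex.log (g z / f z)) W := by
    apply AnalyticOnNhd.clog
    · exact (hg.mono (fun z hz => hz.1.1)).div (hf.mono (fun z hz => hz.1.1))
        (fun z hz => hz.1.2)
    · exact fun z hz => hz.2
  have hzero : (∮ z in C((0:ℂ), r), deriv (fun z => Complex.log (g z / f z)) z) = 0 :=
    aux_deriv_circle hWopen hr hWsub hFan
  have heq : Set.EqOn (fun z => deriv g z / g z - deriv f z / f z)
      (fun z => deriv (fun z => Complex.log (g z / f z)) z) (sphere (0:ℂ) r) := by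
    intro z hz
    have hzU : z ∈ U := hsub (sphere_subset_closedBall hz)
    have hfz := hfne z hz
    have hgz := hgne z hz
    have hqz : g z / f z ∈ Complex.slitPlane := (hWsub hz).2
    have hdq : HasDerivAt (fun z' => g z' / f z')
        ((deriv g z * f z - g z * deriv f z) / f z ^ 2) z :=
      ((hg z hzU).differentiableAt.hasDerivAt).div
        ((hf z hzU).differentiableAt.hasDerivAt) hfz
    have hdF : HasDerivAt (fun z' => Complex.log (g z' / f z'))
        (((deriv g z * f z - g z * deriv f z) / f z ^ 2) / (g z / f z)) z :=
      hdq.clog hqz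
    simp only
    rw [hdF.deriv]
    field_simp
  have hintf : CircleIntegrable (fun z => deriv f z / f z) 0 r :=
    ContinuousOn.circleIntegrable hr.le
      (((hf.deriv.continuousOn).mono (sphere_subset_closedBall.trans hsub)).div
        ((hf.continuousOn).mono (sphere_subset_closedBall.trans hsub)) hfne)
  have hintg : CircleIntegrable (fun z => deriv g z / g z) 0 r :=
    ContinuousOn.circleIntegrable hr.le
      (((hg.deriv.continuousOn).mono (sphere_subset_closedBall.trans hsub)).div
        ((hg.continuousOn).mono (sphere_subset_closedBall.trans hsub)) hgne)
  have hsub' : (∮ z in C((0:ℂ), r), (deriv g z / g z - deriv f z / f z)) = 0 := by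
    rw [circleIntegral.integral_congr hr.le heq]
    exact hzero
  rw [circleIntegral.integral_sub hintg hintf] at hsub'
  exact (sub_eq_zero.mp hsub').symm

/-- The order `ν` of `f` at `0` equals the number of zeros of `f`, counted with
multiplicity, in any sufficiently small disc around `0`; consequently any Rouché
satellite `g` of `f` also has order `ν` at `0`. -/
theorem order_eq_zero_count_and_rouche (f : ℂ → ℂ) (hf : AnalyticAt ℂ f 0)
    (hf0 : f 0 = 0) (hne : analyticOrderAt f 0 ≠ ⊤) (ν : ℕ∞) (hν : analyticOrderAt f 0 = ν) :
    (∃ R > (0 : ℝ), ∀ r : ℝ, 0 < r → r ≤ R →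
      ∑ᶠ z ∈ ball (0 : ℂ) r, zeroOrderAt f z = ν) ∧
    ∀ (g : ℂ → ℂ) (r : ℝ), 0 < r →
      (∀ z ∈ closedBall (0 : ℂ) r, AnalyticAt ℂ f z) →
      (∀ z ∈ closedBall (0 : ℂ) r, AnalyticAt ℂ g z) →
      (∀ z ∈ closedBall (0 : ℂ) r, f z = 0 → z = 0) →
      (∀ z ∈ closedBall (0 : ℂ) r, g z = 0 → z = 0) →
      (∀ z : ℂ, ‖z‖ = r → ‖f z - g z‖ < ‖f z‖) →
      ∀ hg0 : AnalyticAt ℂ g 0, analyticOrderAt g 0 = ν := by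
  constructor
  · -- zero counting in small discs
    have h1 : ∀ᶠ z in nhdsWithin (0:ℂ) {(0:ℂ)}ᶜ, f z ≠ 0 :=
      hf.eventually_eq_zero_or_eventually_ne_zero.resolve_left
        (fun h => hne (analyticOrderAt_eq_top.mpr h))
    rw [eventually_nhdsWithin_iff] at h1
    obtain ⟨R, hRpos, hR⟩ := Metric.eventually_nhds_iff.mp h1
    refine ⟨R, hRpos, fun r hr hrR => ?_⟩
    have hzo : ∀ x : ℂ, x ≠ 0 → f x ≠ 0 → zeroOrderAt f x = 0 := by
      intro x hx hfx
      unfold zeroOrderAt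
      split_ifs with h
      · exact h.analyticOrderAt_eq_zero.mpr hfx
      · rfl
    have hsupp : ball (0:ℂ) r ∩ Function.support (zeroOrderAt f)
        = {(0:ℂ)} ∩ Function.support (zeroOrderAt f) := by
      ext z
      simp only [Set.mem_inter_iff, Function.mem_support, Set.mem_singleton_iff]
      constructor
      · rintro ⟨hz, hzs⟩
        refine ⟨?_, hzs⟩
        by_contra hz0
        have hfz : f z ≠ 0 := hR (by
          rw [mem_ball, dist_zero_right] at hz
          rw [dist_zero_right]
          exact lt_of_lt_of_le hz hrR) hz0
        exact hzs (hzo z hz0 hfz)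
      · rintro ⟨hz, hzs⟩
        exact ⟨hz ▸ mem_ball_self hr, hzs⟩
    calc ∑ᶠ z ∈ ball (0 : ℂ) r, zeroOrderAt f z
        = ∑ᶠ z ∈ ball (0 : ℂ) r ∩ Function.support (zeroOrderAt f), zeroOrderAt f z :=
          (finsum_mem_inter_support _ _).symm
      _ = ∑ᶠ z ∈ ({(0:ℂ)} : Set ℂ) ∩ Function.support (zeroOrderAt f), zeroOrderAt f z := by
          rw [hsupp]
      _ = ∑ᶠ z ∈ ({(0:ℂ)} : Set ℂ), zeroOrderAt f z := finsum_mem_inter_support _ _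
      _ = zeroOrderAt f 0 := finsum_mem_singleton
      _ = ν := by unfold zeroOrderAt; rw [dif_pos hf]; exact hν
  · -- Rouché part
    intro g r hr hfan hgan hfz hgz hlt hg0
    set U : Set ℂ := {z : ℂ | AnalyticAt ℂ f z} ∩ {z : ℂ | AnalyticAt ℂ g z} with hU_def
    have hUopen : IsOpen U := (isOpen_analyticAt ℂ f).inter (isOpen_analyticAt ℂ g)
    have hsubU : closedBall (0:ℂ) r ⊆ U := fun z hz => ⟨hfan z hz, hgan z hz⟩
    have hfU : AnalyticOnNhd ℂ f U := fun z hz => hz.1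
    have hgU : AnalyticOnNhd ℂ g U := fun z hz => hz.2
    have habs : ∀ z ∈ sphere (0:ℂ) r, ‖z‖ = r := by
      intro z hz
      rw [mem_sphere, Complex.dist_eq, sub_zero] at hz
      exact hz
    have hfne : ∀ z ∈ sphere (0:ℂ) r, f z ≠ 0 := by
      intro z hz hz0
      have := hfz z (sphere_subset_closedBall hz) hz0
      rw [this] at hz
      rw [mem_sphere, dist_self] at hz
      exact hr.ne hz
    have hlt' : ∀ z ∈ sphere (0:ℂ) r, ‖f z - g z‖ < ‖f z‖ :=
      fun z hz => hlt z (habs z hz)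
    have hgne : ∀ z ∈ sphere (0:ℂ) r, g z ≠ 0 := by
      intro z hz hgz
      have := hlt' z hz
      rw [hgz, sub_zero] at this
      exact lt_irrefl _ this
    have hgtop : analyticOrderAt g 0 ≠ ⊤ := by
      intro h
      have hev := analyticOrderAt_eq_top.mp h
      have heq0 : Set.EqOn g 0 (closedBall (0:ℂ) r) :=
        AnalyticOnNhd.eqOn_zero_of_preconnected_of_eventuallyEq_zero
          (fun z hz => hgan z hz) (convex_closedBall _ _).isPreconnected
          (mem_closedBall_self hr.le) hev
      have hrs : (r : ℂ) ∈ sphere (0:ℂ) r := by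
        simp [mem_sphere, Complex.dist_eq, abs_of_pos hr]
      exact hgne _ hrs (heq0 (sphere_subset_closedBall hrs))
    obtain ⟨n, hn'⟩ := WithTop.ne_top_iff_exists.mp hne
    obtain ⟨m, hm'⟩ := WithTop.ne_top_iff_exists.mp hgtop
    have hn : analyticOrderAt f 0 = (n : ℕ∞) := hn'.symm
    have hm : analyticOrderAt g 0 = (m : ℕ∞) := hm'.symm
    have e1 := aux_argument_principle hUopen hr hsubU hfU hfz hf hn
    have e2 := aux_argument_principle hUopen hr hsubU hgU hgz hg0 hm
    have e3 := aux_rouche hUopen hr hsubU hfU hgU hfne hlt'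
    have h2pi : (2 * Real.pi * Complex.I : ℂ) ≠ 0 := by
      simp [Real.pi_ne_zero, Complex.I_ne_zero]
    have hnm : ((n : ℂ)) = (m : ℂ) := by
      have := e1.symm.trans (e3.trans e2)
      exact mul_left_cancel₀ h2pi this
    have hnm' : n = m := by exact_mod_cast hnm
    rw [hm, ← hnm', ← hn, hν]
end
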